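/- arXiv:0810.5567 — 5 statements merged into one kernel-verified Lean document; each statement's English description precedes it below -/
import Mathlib

section
/- For all integers 1 ≤ N₁ ≤ N₂ and all finite counting measures μ of total mass N₁ and ν of total mass N₂ on ℤ with μ ≺ ν, the one-step transition distribution p_{N₁}(μ,·) of the N₁-particle branching-selection system is stochastically dominated by the one-step transition distribution p_{N₂}(ν,·) of the N₂-particle system: p_{N₁}(μ,·) ≺≺ p_{N₂}(ν,·). -/
open MeasureTheory ProbabilityTheory Filter

noncomputable section

/-- The random walk step distribution `p·δ₁ + (1−p)·δ₀` on `ℤ`. -/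
def bernoulliStep (p : ℝ) : Measure ℤ :=
  ENNReal.ofReal p • Measure.dirac 1 + ENNReal.ofReal (1 - p) • Measure.dirac 0

/-- One branching-selection step: each of the `N` particles at positions `x i` branches into
two particles, displaced by `y i 0` and `y i 1` respectively; of the `2N` resulting particles
only the `N` rightmost are kept, listed in decreasing order. -/
def nextPop (N : ℕ) (x : Fin N → ℤ) (y : Fin N → Fin 2 → ℤ) : Fin N → ℤ :=
  fun i =>
    (((Finset.univ.val.map fun q : Fin N × Fin 2 => x q.1 + y q.1 q.2).sort (· ≥ ·)).getD i 0)

variable {Ω : Type*}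

/-- The branching-selection particle system with `N` particles driven by the noise family `Y`
(`Y n i ℓ` is the displacement of the `ℓ`-th offspring of the `i`-th particle at time `n`),
started from `N` particles at the origin. -/
def chain (N : ℕ) (Y : ℕ → ℕ → Fin 2 → Ω → ℤ) : ℕ → Ω → Fin N → ℤ
  | 0 => fun _ _ => 0
  | n + 1 => fun ω => nextPop N (chain N Y n ω) fun i ℓ => Y n i.val ℓ ω

/-- Maximal position in a population. -/
def maxPop {N : ℕ} (x : Fin N → ℤ) : ℤ :=
  ((Finset.univ.val.map x).sort (· ≤ ·)).getLastD 0

/-- Minimal position in a population. -/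
def minPop {N : ℕ} (x : Fin N → ℤ) : ℤ :=
  ((Finset.univ.val.map x).sort (· ≤ ·)).headD 0

/-- The stochastic order `≺` between populations (finite counting measures on `ℤ`):
`x ≺ y` iff for every `t ∈ ℤ` the number of particles of `x` in `[t,∞)` is at most the
number of particles of `y` in `[t,∞)`. -/
def popLE {N₁ N₂ : ℕ} (x : Fin N₁ → ℤ) (y : Fin N₂ → ℤ) : Prop :=
  ∀ t : ℤ,
    (Finset.univ.filter fun i => t ≤ x i).card ≤ (Finset.univ.filter fun j => t ≤ y j).card

/-- The transition kernel `p_N` of the `N`-particle branching-selection system: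
branch each particle into two, displacing the offspring by i.i.d. Bernoulli(`p`) steps,
then keep the `N` rightmost of the `2N` resulting particles. -/
def stepMeasure (p : ℝ) (N : ℕ) (x : Fin N → ℤ) : Measure (Fin N → ℤ) :=
  Measure.map (fun y : Fin N × Fin 2 → ℤ => nextPop N x fun i ℓ => y (i, ℓ))
    (Measure.pi fun _ : Fin N × Fin 2 => bernoulliStep p)

/-- The stochastic order `≺≺` between distributions of populations: there is a coupling
`(X, Y)` with the two prescribed marginals such that `X ≺ Y` almost surely. -/
def stochDom {N₁ N₂ : ℕ} (Q : Measure (Fin N₁ → ℤ)) (R : Measure (Fin N₂ → ℤ)) : Prop :=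
  ∃ (Ω' : Type) (_ : MeasureSpace Ω') (X : Ω' → Fin N₁ → ℤ) (Z : Ω' → Fin N₂ → ℤ),
    IsProbabilityMeasure (ℙ : Measure Ω') ∧
    Measure.map X ℙ = Q ∧ Measure.map Z ℙ = R ∧ ∀ᵐ ω ∂(ℙ : Measure Ω'), popLE (X ω) (Z ω)

/-!
By Hall's marriage theorem, `μ ≺ ν` yields an injection `f` from the particles of `μ` into those
of `ν` with `μ i ≤ ν (f i)`. Couple the two steps by letting the offspring of particle `i` of `μ`
reuse the displacements of the offspring of particle `f i` of `ν`; by injectivity of `f` these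
are still i.i.d. Bernoulli. The `2 N₁` offspring of `μ` are then dominated, through an injection,
by the `2 N₂` offspring of `ν`, so for every `k < 2 N₁` the `k`-th largest of the former is at
most the `k`-th largest of the latter; in particular this holds for the `N₁` survivors.
-/

namespace List

variable {α : Type*} [LinearOrder α]

theorem Pairwise.le_getElem_iff_lt_countP {L : List α} (hL : L.Pairwise (· ≥ ·)) {i : ℕ}
    (hi : i < L.length) (t : α) : t ≤ L[i] ↔ i < L.countP (t ≤ ·) := by
  constructor
  · intro ht
    have hprefix : ∀ x ∈ L.take (i + 1), t ≤ x := by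
      intro x hx
      obtain ⟨j, hj, rfl⟩ := mem_iff_getElem.1 hx
      rw [getElem_take]
      exact ht.trans (hL.rel_get_of_le (a := ⟨j, by grind⟩) (b := ⟨i, hi⟩) (by grind))
    calc i < (L.take (i + 1)).length := by grind
      _ = (L.take (i + 1)).countP (t ≤ ·) := (countP_eq_length.2 (by simpa using hprefix)).symm
      _ ≤ L.countP (t ≤ ·) := (take_sublist _ _).countP_le
  · intro h
    by_contra! hlt
    have hsuffix : (L.drop i).countP (t ≤ ·) = 0 := by
      refine countP_eq_zero.2 fun x hx => ?_
      obtain ⟨j, hj, rfl⟩ := mem_iff_getElem.1 hx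
      rw [getElem_drop]
      simpa using (hL.rel_get_of_le (a := ⟨i, hi⟩) (b := ⟨i + j, by grind⟩) (by grind)).trans_lt hlt
    have hcount := countP_append (p := (t ≤ ·)) (l₁ := L.take i) (l₂ := L.drop i)
    rw [take_append_drop, hsuffix] at hcount
    have := (L.take i).countP_le_length (p := (t ≤ ·))
    grind

theorem getD_le_getD_of_countP_le {L₁ L₂ : List α} (h₁ : L₁.Pairwise (· ≥ ·))
    (h₂ : L₂.Pairwise (· ≥ ·)) (hcount : ∀ t, L₁.countP (t ≤ ·) ≤ L₂.countP (t ≤ ·)) {i : ℕ}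
    (hi : i < L₁.length) (d : α) : L₁.getD i d ≤ L₂.getD i d := by
  have hcount₂ : i < L₂.countP (L₁[i] ≤ ·) :=
    ((h₁.le_getElem_iff_lt_countP hi _).1 le_rfl).trans_le (hcount _)
  have hi₂ : i < L₂.length := hcount₂.trans_le countP_le_length
  rw [getD_eq_getElem _ _ hi, getD_eq_getElem _ _ hi₂]
  exact (h₂.le_getElem_iff_lt_countP hi₂ _).2 hcount₂

end List

section FiniteFamily

open Finset Function

variable {α ι κ : Type*} [LinearOrder α] [Fintype ι] [Fintype κ]

theorem card_filter_le_card_filter_of_injective {a : ι → α} {b : κ → α} {g : ι → κ}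
    (hg : Injective g) (hab : ∀ i, a i ≤ b (g i)) (t : α) :
    (univ.filter fun i => t ≤ a i).card ≤ (univ.filter fun k => t ≤ b k).card :=
  card_le_card_of_injOn g (fun i hi => by simpa using (by simpa using hi : t ≤ a i).trans (hab i))
    hg.injOn

theorem exists_injective_le_of_card_filter_le {a : ι → α} {b : κ → α}
    (h : ∀ t, (univ.filter fun i => t ≤ a i).card ≤ (univ.filter fun k => t ≤ b k).card) :
    ∃ g : ι → κ, Injective g ∧ ∀ i, a i ≤ b (g i) := by
  classical
  suffices hall : ∀ s : Finset ι,
      s.card ≤ (s.biUnion fun i => univ.filter fun k => a i ≤ b k).card by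
    obtain ⟨g, hg, hab⟩ := (all_card_le_biUnion_card_iff_exists_injective _).1 hall
    exact ⟨g, hg, fun i => by simpa using hab i⟩
  intro s
  rcases s.eq_empty_or_nonempty with rfl | hs
  · simp
  -- Hall's condition for `s` follows from the hypothesis at the lowest value `a i₀` on `s`.
  obtain ⟨i₀, hi₀, hmin⟩ := s.exists_min_image a hs
  calc s.card ≤ (univ.filter fun i => a i₀ ≤ a i).card :=
        card_le_card fun i hi => by simpa using hmin i hi
    _ ≤ (univ.filter fun k => a i₀ ≤ b k).card := h _
    _ ≤ _ := card_le_card fun k hk => mem_biUnion.2 ⟨i₀, hi₀, by simpa using hk⟩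

theorem countP_sort_map_eq_card_filter (a : ι → α) (t : α) :
    ((univ.val.map a).sort (· ≥ ·)).countP (t ≤ ·) = (univ.filter fun i => t ≤ a i).card := by
  rw [← Multiset.coe_countP, Multiset.sort_eq, Multiset.countP_map]
  rfl

theorem sort_map_getD_le_of_injective {a : ι → α} {b : κ → α} {g : ι → κ} (hg : Injective g)
    (hab : ∀ i, a i ≤ b (g i)) {i : ℕ} (hi : i < Fintype.card ι) (d : α) :
    ((univ.val.map a).sort (· ≥ ·)).getD i d ≤ ((univ.val.map b).sort (· ≥ ·)).getD i d := by
  refine List.getD_le_getD_of_countP_le (Multiset.pairwise_sort _ _) (Multiset.pairwise_sort _ _)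
    (fun t => ?_) (by simpa using hi) d
  rw [countP_sort_map_eq_card_filter, countP_sort_map_eq_card_filter]
  exact card_filter_le_card_filter_of_injective hg hab t

end FiniteFamily

theorem nextPop_le_nextPop_castLE {N₁ N₂ : ℕ} (hN : N₁ ≤ N₂) {μ : Fin N₁ → ℤ} {ν : Fin N₂ → ℤ}
    {f : Fin N₁ → Fin N₂} (hf : Function.Injective f) (hμν : ∀ i, μ i ≤ ν (f i))
    (y : Fin N₂ → Fin 2 → ℤ) (i : Fin N₁) :
    nextPop N₁ μ (fun i => y (f i)) i ≤ nextPop N₂ ν y (Fin.castLE hN i) :=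
  sort_map_getD_le_of_injective (g := Prod.map f id) (hf.prodMap Function.injective_id)
    (fun q => add_le_add_left (hμν q.1) _) (by simp only [Fintype.card_prod, Fintype.card_fin]; omega) 0

theorem popLE_of_le_castLE {N₁ N₂ : ℕ} (hN : N₁ ≤ N₂) {x : Fin N₁ → ℤ} {y : Fin N₂ → ℤ}
    (hxy : ∀ i, x i ≤ y (Fin.castLE hN i)) : popLE x y :=
  card_filter_le_card_filter_of_injective (Fin.castLE_injective hN) hxy

theorem MeasureTheory.Measure.pi_map_precomp {ι κ α : Type*} [Fintype ι] [Fintype κ]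
    [MeasurableSpace α] (μ : κ → Measure α) [∀ k, IsProbabilityMeasure (μ k)] {g : ι → κ}
    (hg : Function.Injective g) :
    (Measure.pi μ).map (fun ω i => ω (g i)) = Measure.pi fun i => μ (g i) := by
  have hindep : iIndepFun (fun i (ω : κ → α) => ω (g i)) (Measure.pi μ) :=
    (iIndepFun_pi (X := fun _ => id) fun _ => aemeasurable_id).precomp hg
  rw [hindep.map_fun_eq_pi_map fun i => (measurable_pi_apply _).aemeasurable]
  congr with i : 1
  exact (measurePreserving_eval μ (g i)).map_eq

theorem isProbabilityMeasure_bernoulliStep {p : ℝ} (hp0 : 0 ≤ p) (hp1 : p ≤ 1) :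
    IsProbabilityMeasure (bernoulliStep p) := by
  constructor
  simp only [bernoulliStep, Measure.add_apply, Measure.smul_apply, smul_eq_mul,
    measure_univ, mul_one]
  rw [← ENNReal.ofReal_add hp0 (by linarith)]
  norm_num

theorem kernel_monotone_general
    (p : ℝ) (hp0 : 0 < p) (hp1 : p < 1)
    (N₁ N₂ : ℕ) (hN₂ : N₁ ≤ N₂)
    (μ : Fin N₁ → ℤ) (ν : Fin N₂ → ℤ) (hμν : popLE μ ν) :
    stochDom (stepMeasure p N₁ μ) (stepMeasure p N₂ ν) := by
  have := isProbabilityMeasure_bernoulliStep hp0.le hp1.le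
  obtain ⟨f, hf, hfμν⟩ := exists_injective_le_of_card_filter_le hμν
  refine ⟨Fin N₂ × Fin 2 → ℤ, ⟨Measure.pi fun _ => bernoulliStep p⟩,
    fun ω => nextPop N₁ μ fun i ℓ => ω (f i, ℓ), fun ω => nextPop N₂ ν fun j ℓ => ω (j, ℓ),
    inferInstanceAs (IsProbabilityMeasure (Measure.pi _)), ?_, rfl, .of_forall fun ω => ?_⟩
  · have hnoise := Measure.pi_map_precomp (fun _ => bernoulliStep p)
      (hf.prodMap (Function.injective_id (α := Fin 2)))
    rw [stepMeasure, ← hnoise, Measure.map_map (measurable_of_countable _) (by fun_prop)]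
    rfl
  · exact popLE_of_le_castLE hN₂
      (nextPop_le_nextPop_castLE hN₂ hf hfμν fun j ℓ => ω (j, ℓ))

/-- **Proposition (monotonicity of the kernels):** for `1 ≤ N₁ ≤ N₂` and populations
`μ ≺ ν` of respective sizes `N₁` and `N₂`, the one-step distribution `p_{N₁}(μ,·)` is
stochastically dominated by `p_{N₂}(ν,·)`. -/
theorem kernel_monotone
    (p : ℝ) (hp0 : 0 < p) (hp1 : p < 1)
    (N₁ N₂ : ℕ) (hN₁ : 1 ≤ N₁) (hN₂ : N₁ ≤ N₂)
    (μ : Fin N₁ → ℤ) (ν : Fin N₂ → ℤ) (hμν : popLE μ ν) :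
    stochDom (stepMeasure p N₁ μ) (stepMeasure p N₂ ν) :=
  kernel_monotone_general p hp0 hp1 N₁ N₂ hN₂ μ ν hμν

end
end

section
/- For every N ≥ 1 and every n ≥ 0, with probability one the diameter of the population satisfies d(X^N_n) = max X^N_n − min X^N_n ≤ ⌈log(N)/log(2)⌉ + 1. -/
open MeasureTheory ProbabilityTheory Filter

noncomputable section

variable {Ω : Type*}

/-!
Almost surely every displacement is `0` or `1`, and then the bound holds surely. Call a population
dyadically clustered if, for every particle `x j` and every `k`, at least `min (2 ^ k) N` particles
lie at or above `x j - k`. Branching doubles the number of particles above any level, the maximum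
rises by at most one, and selection keeps the `N` rightmost particles, so the property propagates
from `N • δ₀`. Once `2 ^ k ≥ N` it says that all particles lie within `k = ⌈log₂ N⌉` of each other.
-/

theorem List.le_getElem_of_lt_countP {α : Type*} [LinearOrder α] {t : α} :
    ∀ {L : List α}, L.Pairwise (· ≥ ·) → ∀ {i : ℕ} (hi : i < L.length),
      i < L.countP (t ≤ ·) → t ≤ L[i]
  | a :: l, hL, 0, _, h => by
      obtain ⟨b, hb, htb⟩ := List.countP_pos_iff.1 h
      rcases List.mem_cons.1 hb with rfl | hb
      · simpa using htb
      · exact (decide_eq_true_iff.1 htb).trans (List.rel_of_pairwise_cons hL hb)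
  | a :: l, hL, i + 1, hi, h =>
      List.le_getElem_of_lt_countP (List.pairwise_cons.1 hL).2 (Nat.lt_of_succ_lt_succ hi) <| by
        rw [List.countP_cons] at h
        split_ifs at h <;> omega

open Finset

section Selection

variable {N : ℕ} (x : Fin N → ℤ) (y : Fin N → Fin 2 → ℤ)

def offspring : Multiset ℤ :=
  univ.val.map fun q : Fin N × Fin 2 => x q.1 + y q.1 q.2

lemma nextPop_eq_getElem (i : Fin N) :
    nextPop N x y i = ((offspring x y).sort (· ≥ ·))[(i : ℕ)]'(by
      simp [offspring]; omega) :=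
  List.getD_eq_getElem _ _ _

lemma nextPop_mem_offspring (i : Fin N) : nextPop N x y i ∈ offspring x y := by
  rw [nextPop_eq_getElem, ← Multiset.mem_sort (· ≥ ·)]
  exact List.getElem_mem _

lemma le_nextPop_of_lt_countP {t : ℤ} {i : Fin N}
    (h : (i : ℕ) < (offspring x y).countP (t ≤ ·)) : t ≤ nextPop N x y i := by
  rw [nextPop_eq_getElem]
  refine List.le_getElem_of_lt_countP (Multiset.pairwise_sort _ _) _ ?_
  rwa [← Multiset.coe_countP, Multiset.sort_eq]

lemma min_countP_offspring_le_card_filter (t : ℤ) :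
    min N ((offspring x y).countP (t ≤ ·)) ≤ #{i | t ≤ nextPop N x y i} := by
  rw [← Fin.card_filter_val_lt]
  exact card_le_card fun i hi =>
    mem_filter.2 ⟨mem_univ i, le_nextPop_of_lt_countP x y (by simpa using hi)⟩

lemma two_mul_card_filter_le_countP_offspring {y : Fin N → Fin 2 → ℤ} (hy : ∀ i ℓ, 0 ≤ y i ℓ)
    (t : ℤ) : 2 * #{i | t ≤ x i} ≤ (offspring x y).countP (t ≤ ·) := by
  calc 2 * #{i | t ≤ x i} = #((univ.filter (t ≤ x ·)) ×ˢ (univ : Finset (Fin 2))) := by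
        rw [card_product, card_univ, Fintype.card_fin, mul_comm]
  _ ≤ #{q : Fin N × Fin 2 | t ≤ x q.1 + y q.1 q.2} := card_le_card fun q hq => by
        have := hy q.1 q.2
        simp only [mem_product, mem_filter, mem_univ, true_and, and_true] at hq ⊢
        omega
  _ = (offspring x y).countP (t ≤ ·) := by
        rw [offspring, Multiset.countP_map]; rfl

end Selection

def IsDyadicallyClustered {N : ℕ} (x : Fin N → ℤ) : Prop :=
  ∀ (k : ℕ) (j : Fin N), min (2 ^ k) N ≤ #{i | x j - k ≤ x i}

lemma isDyadicallyClustered_nextPop {N : ℕ} {x : Fin N → ℤ} {y : Fin N → Fin 2 → ℤ}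
    (hy : ∀ i ℓ, y i ℓ = 0 ∨ y i ℓ = 1) (hx : IsDyadicallyClustered x) :
    IsDyadicallyClustered (nextPop N x y) := by
  intro k j
  cases k with
  | zero =>
    have : 0 < #{i | nextPop N x y j - (0 : ℕ) ≤ nextPop N x y i} :=
      card_pos.2 ⟨j, by simp⟩
    omega
  | succ k =>
    obtain ⟨q, -, hq⟩ := Multiset.mem_map.1 (nextPop_mem_offspring x y j)
    have hy0 : ∀ i ℓ, 0 ≤ y i ℓ := fun i ℓ => by rcases hy i ℓ with h | h <;> simp [h]
    have hqj : nextPop N x y j ≤ x q.1 + 1 := by rcases hy q.1 q.2 with h | h <;> omega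
    calc min (2 ^ (k + 1)) N ≤ min N (2 * min (2 ^ k) N) := by rw [pow_succ]; omega
    _ ≤ min N (2 * #{i | x q.1 - k ≤ x i}) := by gcongr; exact hx k q.1
    _ ≤ min N ((offspring x y).countP (x q.1 - k ≤ ·)) := by
        gcongr; exact two_mul_card_filter_le_countP_offspring x hy0 _
    _ ≤ #{i | x q.1 - k ≤ nextPop N x y i} := min_countP_offspring_le_card_filter x y _
    _ ≤ #{i | nextPop N x y j - ↑(k + 1) ≤ nextPop N x y i} :=
        card_le_card <| monotone_filter_right _ fun i _ (hi : _ ≤ _) => by push_cast; omega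

lemma IsDyadicallyClustered.sub_le {N : ℕ} {x : Fin N → ℤ} (hx : IsDyadicallyClustered x) {k : ℕ} (hk : N ≤ 2 ^ k) (i j : Fin N) :
    x j - x i ≤ k := by
  have hcard : #{i | x j - k ≤ x i} = #(univ : Finset (Fin N)) :=
    le_antisymm (card_filter_le _ _) (by simpa [min_eq_right hk] using hx k j)
  have := card_filter_eq_iff.1 hcard i (mem_univ i)
  omega

theorem List.getLastD_sub_headD_le {α : Type*} [AddGroup α] [LE α] {L : List α} {d : α}
    (hd : 0 ≤ d) (h : ∀ a ∈ L, ∀ b ∈ L, b - a ≤ d) : L.getLastD 0 - L.headD 0 ≤ d := by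
  cases L with
  | nil => simpa
  | cons a l =>
    rw [List.getLastD_eq_getLast?, List.getLast?_eq_some_getLast (List.cons_ne_nil a l)]
    exact h a List.mem_cons_self _ (List.getLast_mem _)

lemma maxPop_sub_minPop_le {N : ℕ} {x : Fin N → ℤ} {d : ℤ} (hd : 0 ≤ d)
    (h : ∀ i j, x j - x i ≤ d) : maxPop x - minPop x ≤ d :=
  List.getLastD_sub_headD_le hd fun a ha b hb => by
    obtain ⟨i, -, rfl⟩ := Multiset.mem_map.1 ((Multiset.mem_sort _).1 ha)
    obtain ⟨j, -, rfl⟩ := Multiset.mem_map.1 ((Multiset.mem_sort _).1 hb)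
    exact h i j

lemma isDyadicallyClustered_chain {Ω : Type*} {N : ℕ} {Y : ℕ → ℕ → Fin 2 → Ω → ℤ} {ω : Ω}
    (hY : ∀ m i ℓ, Y m i ℓ ω = 0 ∨ Y m i ℓ ω = 1) (n : ℕ) :
    IsDyadicallyClustered (chain N Y n ω) := by
  induction n with
  | zero =>
    intro k j
    show _ ≤ #{i | (0 : ℤ) - k ≤ 0}
    simp
  | succ n ih =>
    exact isDyadicallyClustered_nextPop (y := fun i ℓ => Y n i ℓ ω) (fun i ℓ => hY n i ℓ) ih

lemma ceil_log_div_log_two (N : ℕ) : ⌈Real.log N / Real.log 2⌉ = Nat.clog 2 N := by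
  have := Real.ceil_logb_natCast (b := 2) (Nat.cast_nonneg (α := ℝ) N)
  rw [Int.clog_natCast] at this
  exact_mod_cast this

lemma bernoulliStep_ne_zero (p : ℝ) : bernoulliStep p ≠ 0 := by
  intro h
  have huniv := congrArg (· Set.univ) h
  simp [bernoulliStep] at huniv
  linarith [huniv.1, huniv.2]

lemma ae_bernoulliStep (p : ℝ) : ∀ᵐ z ∂bernoulliStep p, z = 0 ∨ z = 1 := by
  refine ae_add_measure_iff.2 ⟨Measure.ae_smul_measure ?_ _, Measure.ae_smul_measure ?_ _⟩ <;>
    simp [ae_dirac_eq]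

lemma ae_eq_zero_or_eq_one_of_map_eq_bernoulliStep {Ω : Type*} [MeasurableSpace Ω]
    {μ : Measure Ω} {X : Ω → ℤ} {p : ℝ} (h : μ.map X = bernoulliStep p) :
    ∀ᵐ ω ∂μ, X ω = 0 ∨ X ω = 1 :=
  ae_of_ae_map (.of_map_ne_zero (h ▸ bernoulliStep_ne_zero p)) (h ▸ ae_bernoulliStep p)

theorem diameter_bound_general
    (p : ℝ)
    (Ω : Type*) [MeasureSpace Ω]
    (Y : ℕ → ℕ → Fin 2 → Ω → ℤ)
    (hlaw : ∀ q : ℕ × ℕ × Fin 2, Measure.map (Y q.1 q.2.1 q.2.2) ℙ = bernoulliStep p)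
    (N : ℕ) (n : ℕ) :
    ∀ᵐ ω ∂ℙ,
      maxPop (chain N Y n ω) - minPop (chain N Y n ω) ≤
        ⌈Real.log N / Real.log 2⌉ + 1 := by
  have hY : ∀ᵐ ω ∂ℙ, ∀ m i ℓ, Y m i ℓ ω = 0 ∨ Y m i ℓ ω = 1 := by
    simp only [ae_all_iff]
    exact fun m i ℓ => ae_eq_zero_or_eq_one_of_map_eq_bernoulliStep (hlaw (m, i, ℓ))
  filter_upwards [hY] with ω hω
  have hspread := (isDyadicallyClustered_chain hω n).sub_le (Nat.le_pow_clog one_lt_two N)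
  calc maxPop (chain N Y n ω) - minPop (chain N Y n ω) ≤ Nat.clog 2 N :=
        maxPop_sub_minPop_le (Nat.cast_nonneg _) hspread
  _ = ⌈Real.log N / Real.log 2⌉ := (ceil_log_div_log_two N).symm
  _ ≤ _ := le_add_of_nonneg_right zero_le_one

/-- **Proposition (bounded diameter):** for every `N ≥ 1` and every `n ≥ 0`, with
probability one, `d(X^N_n) = max X^N_n − min X^N_n ≤ ⌈log N / log 2⌉ + 1`. -/
theorem diameter_bound
    (p : ℝ) (hp0 : 0 < p) (hp1 : p < 1)
    (Ω : Type*) [MeasureSpace Ω] [IsProbabilityMeasure (ℙ : Measure Ω)]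
    (Y : ℕ → ℕ → Fin 2 → Ω → ℤ)
    (hiid : iIndepFun
      (fun q : ℕ × ℕ × Fin 2 => Y q.1 q.2.1 q.2.2) ℙ)
    (hlaw : ∀ q : ℕ × ℕ × Fin 2, Measure.map (Y q.1 q.2.1 q.2.2) ℙ = bernoulliStep p)
    (N : ℕ) (hN : 1 ≤ N) (n : ℕ) :
    ∀ᵐ ω ∂ℙ,
      maxPop (chain N Y n ω) - minPop (chain N Y n ω) ≤
        ⌈Real.log N / Real.log 2⌉ + 1 :=
  diameter_bound_general p Ω Y hlaw N n
end
end

section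
/- Let 0 < v₁ < v₂ < 1, let m ≥ 1 and n ≥ 1 be integers, and let z₀ = 0, z₁, …, z_n be a sequence of reals with increments z_{i+1} − z_i ∈ {0,1} such that z_n ≥ v₂·n. Then the number of indices i ∈ {0,…,n−m} such that z_{i+k} − z_i ≥ v₁·k for all k ∈ {0,…,m} is at least ((v₂ − v₁)/(1 − v₁))·(n/m) − 1/(1 − v₁). -/
/-! Walk greedily along the path. From an index `i` at which the path ascends at rate `v` for
`m` steps, jump `m` steps: the path rises by at most `m`, i.e. by at most `(1 - v) m` more than
slope `v` allows. From any other index `i`, jump to some `k ≤ m` with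
`z (i + k) - z i < v k`, staying below slope `v`. A final tail of fewer than `m` steps again
costs at most `(1 - v) m`. Hence `z n ≤ v n + (1 - v) m (#good + 1)`, and `z n ≥ v₂ n` bounds
the number of good indices from below. -/

open Finset

def AscendsFrom (v : ℝ) (m : ℕ) (z : ℕ → ℝ) (i : ℕ) : Prop :=
  ∀ k ≤ m, v * k ≤ z (i + k) - z i

noncomputable instance (v : ℝ) (m : ℕ) (z : ℕ → ℝ) : DecidablePred (AscendsFrom v m z) :=
  fun i => inferInstanceAs (Decidable (∀ k ≤ m, v * k ≤ z (i + k) - z i))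

theorem sub_le_of_forall_succ_sub_le_one {z : ℕ → ℝ} {n : ℕ}
    (hstep : ∀ j < n, z (j + 1) - z j ≤ 1) {a t : ℕ} (h : a + t ≤ n) :
    z (a + t) - z a ≤ t := by
  induction t with
  | zero => simp
  | succ t ih =>
    have := hstep (a + t) (by omega)
    rw [← add_assoc]
    push_cast
    linarith [ih (by omega)]

section Counting

variable {p : ℕ → Prop} [DecidablePred p] {a b k : ℕ}

theorem card_filter_Ico_add_le : #{j ∈ Ico (a + k) b | p j} ≤ #{j ∈ Ico a b | p j} :=
  card_le_card (filter_subset_filter _ (Ico_subset_Ico_left (by omega)))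

theorem card_filter_Ico_add_add_one_le (hab : a < b) (ha : p a) (hk : 0 < k) :
    #{j ∈ Ico (a + k) b | p j} + 1 ≤ #{j ∈ Ico a b | p j} := by
  rw [← insert_Ico_add_one_left_eq_Ico hab, filter_insert, if_pos ha,
    card_insert_of_notMem (by simp)]
  gcongr
  exact hk

end Counting

theorem sub_le_mul_add_card_ascendsFrom {v : ℝ} {m n : ℕ} {z : ℕ → ℝ} (hv : v ≤ 1)
    (hm : 0 < m) (hstep : ∀ j < n, z (j + 1) - z j ≤ 1) {i : ℕ} (hi : i ≤ n) :
    z n - z i ≤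
      v * (n - i) + (1 - v) * m * (#{j ∈ Ico i (n - m + 1) | AscendsFrom v m z j} + 1) := by
  induction hd : n - i using Nat.strong_induction_on generalizing i with
  | _ d ih =>
  have hn : n = i + d := by omega
  have hgap : ((n : ℝ) - i) = d := by rw [sub_eq_iff_eq_add']; exact_mod_cast hn
  have hcard : (0 : ℝ) ≤ #{j ∈ Ico i (n - m + 1) | AscendsFrom v m z j} := Nat.cast_nonneg _
  rw [hgap]
  rcases lt_or_ge d m with hdm | hdm
  · have hrise : z n - z i ≤ d := by
      rw [hn]; exact sub_le_of_forall_succ_sub_le_one hstep hn.ge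
    have : (d : ℝ) ≤ m := by exact_mod_cast hdm.le
    nlinarith [mul_nonneg (sub_nonneg.2 hv) (sub_nonneg.2 this),
      mul_nonneg (mul_nonneg (sub_nonneg.2 hv) (Nat.cast_nonneg m)) hcard]
  by_cases hasc : AscendsFrom v m z i
  · have hrise : z (i + m) - z i ≤ m := sub_le_of_forall_succ_sub_le_one hstep (by omega)
    have hrest := ih (d - m) (by omega) (i := i + m) (by omega) (by omega)
    have hcount : (#{j ∈ Ico (i + m) (n - m + 1) | AscendsFrom v m z j} + 1 : ℝ) ≤
        #{j ∈ Ico i (n - m + 1) | AscendsFrom v m z j} := by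
      exact_mod_cast card_filter_Ico_add_add_one_le (by omega) hasc hm
    push_cast at hrest
    nlinarith [mul_le_mul_of_nonneg_left hcount
      (mul_nonneg (sub_nonneg.2 hv) (Nat.cast_nonneg m))]
  · simp only [AscendsFrom, not_forall, not_le] at hasc
    obtain ⟨k, hkm, hfall⟩ := hasc
    have hk : 0 < k := Nat.pos_of_ne_zero (by rintro rfl; simp at hfall)
    have hrest := ih (d - k) (by omega) (i := i + k) (by omega) (by omega)
    have hcount : (#{j ∈ Ico (i + k) (n - m + 1) | AscendsFrom v m z j} : ℝ) ≤
        #{j ∈ Ico i (n - m + 1) | AscendsFrom v m z j} := by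
      exact_mod_cast card_filter_Ico_add_le
    push_cast at hrest
    nlinarith [mul_le_mul_of_nonneg_left hcount
      (mul_nonneg (sub_nonneg.2 hv) (Nat.cast_nonneg m))]

theorem many_good_indices_general
    (v₁ v₂ : ℝ) (h0 : 0 < v₁) (h12 : v₁ < v₂) (h21 : v₂ < 1)
    (m n : ℕ) (hm : 1 ≤ m)
    (z : ℕ → ℝ) (hz0 : z 0 = 0)
    (hstep : ∀ i < n, z (i + 1) - z i = 0 ∨ z (i + 1) - z i = 1)
    (hzn : v₂ * n ≤ z n) :
    (v₂ - v₁) / (1 - v₁) * ((n : ℝ) / m) - 1 / (1 - v₁) ≤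
      (((Finset.range (n - m + 1)).filter
        fun i => ∀ k ≤ m, v₁ * k ≤ z (i + k) - z i).card : ℝ) := by
  change _ ≤ ((#{i ∈ range (n - m + 1) | AscendsFrom v₁ m z i} : ℕ) : ℝ)
  set c : ℝ := ((#{i ∈ range (n - m + 1) | AscendsFrom v₁ m z i} : ℕ) : ℝ)
  have hv₁ : 0 < 1 - v₁ := by linarith
  have hrise : z n ≤ v₁ * n + (1 - v₁) * m * (c + 1) := by
    have := sub_le_mul_add_card_ascendsFrom (h12.le.trans h21.le) hm
      (fun j hj => by rcases hstep j hj with h | h <;> linarith) (Nat.zero_le n)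
    rwa [hz0, Nat.cast_zero, sub_zero, sub_zero, ← range_eq_Ico] at this
  have hcover : (v₂ - v₁) / (1 - v₁) * (n / m) ≤ c + 1 := by
    rw [div_mul_div_comm, div_le_iff₀ (mul_pos hv₁ (by exact_mod_cast hm))]
    linarith
  linarith [one_le_one_div hv₁ (by linarith)]

/-- **Lemma (Pemantle, Lemma 5.2; deterministic form):** let `0 < v₁ < v₂ < 1`, let
`m, n ≥ 1`, and let `z₀ = 0, z₁, …, z_n` have increments in `{0,1}` with `z_n ≥ v₂·n`.
Then the number of indices `i ∈ {0,…,n−m}` from which the path ascends at rate at least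
`v₁` for `m` consecutive steps is at least `((v₂ − v₁)/(1 − v₁))·(n/m) − 1/(1 − v₁)`. -/
theorem many_good_indices
    (v₁ v₂ : ℝ) (h0 : 0 < v₁) (h12 : v₁ < v₂) (h21 : v₂ < 1)
    (m n : ℕ) (hm : 1 ≤ m) (hn : 1 ≤ n)
    (z : ℕ → ℝ) (hz0 : z 0 = 0)
    (hstep : ∀ i < n, z (i + 1) - z i = 0 ∨ z (i + 1) - z i = 1)
    (hzn : v₂ * n ≤ z n) :
    (v₂ - v₁) / (1 - v₁) * ((n : ℝ) / m) - 1 / (1 - v₁) ≤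
      (((Finset.range (n - m + 1)).filter
        fun i => ∀ k ≤ m, v₁ * k ≤ z (i + k) - z i).card : ℝ) :=
  many_good_indices_general v₁ v₂ h0 h12 h21 m n hm z hz0 hstep hzn
end

section
/- Fix p ∈ (0,1/2) and an integer A ≥ 4. There exists a constant ζ₁ > 0 such that for all sufficiently large m, P̂[ĝ_m(k) ≤ Ŝ_k ≤ d̂_m(k) for all k ∈ {0,…,m}] ≥ exp(−ζ₁·m^{1/3}), where (S_k) under P̂ is a random walk started at 0 with i.i.d. steps of law v(p)·δ_1 + (1−v(p))·δ_0 and Ŝ_k := S_k − v(p)·k. -/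
open MeasureTheory ProbabilityTheory Filter

noncomputable section

/-- The large deviations rate function `Λ` for sums of i.i.d. Bernoulli(`p`) variables. -/
def rateFn (p x : ℝ) : ℝ :=
  x * Real.log (x / p) + (1 - x) * Real.log ((1 - x) / (1 - p))

/-- `a_m = ⌊m^{1/3}⌋`. -/
def am (m : ℕ) : ℕ := ⌊(m : ℝ) ^ ((1 : ℝ) / 3)⌋₊

/-- `c_m = ⌊m^{2/3}⌋`. -/
def cm (m : ℕ) : ℕ := ⌊(m : ℝ) ^ ((2 : ℝ) / 3)⌋₊

/-- `s_m = ⌊a_m / (2(1 − v(p)))⌋`. -/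
def sm (vp : ℝ) (m : ℕ) : ℕ := ⌊(am m : ℝ) / (2 * (1 - vp))⌋₊

/-- The upper barrier `d_m`. -/
def dBar (vp : ℝ) (m k : ℕ) : ℝ :=
  if k ≤ sm vp m then (k : ℝ) else vp * k + am m

/-- The lower barrier `g_m`. -/
def gBar (vp : ℝ) (A m k : ℕ) : ℝ :=
  if k ≤ sm vp m then (k : ℝ)
  else if k ≤ m - cm m then vp * ((k : ℝ) + 1)
  else vp * k - A * am m

/-- The random walk with increments `ξ`, started at `0`. -/
def walk {Ω : Type*} (ξ : ℕ → Ω → ℤ) (k : ℕ) (ω : Ω) : ℤ :=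
  ∑ j ∈ Finset.range k, ξ j ω

/-!
Force the first `s_m ≍ m^{1/3}` steps up (probability `v^{s_m}`): this is what the barriers
demand there, and it lifts the compensated walk into the middle third of the band `[v, a_m]`,
which lies between the compensated barriers for the rest of the time. Then cut the time into
`O(m^{1/3})` blocks of length `N ≍ a_m²`. In one block, Kolmogorov's maximal inequality keeps the
walk within `a_m / 8` of its starting point except with probability `1/32`, and a fourth-moment
Paley–Zygmund bound makes it end on the side of its start facing the centre of the band with
probability at least `1/16`; so each block keeps the walk in the band and returns it to the middle
third with probability at least `1/32`. The Markov property multiplies these bounds, giving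
`v^{s_m} 32^{-O(m^{1/3})} ≥ exp (-ζ m^{1/3})`.

The walk over `n` steps is modelled by the bit strings of length `n` with their product weights;
the probability of a set of strings is the probability of the union of the corresponding cylinder
events of `(ξ j)`.
-/

open Finset

/-- Paley–Zygmund for the sign of a centred variable: `P(Z ≥ 0) ≥ (E Z²)² / (4 E Z⁴)`. Two
Cauchy–Schwarz steps give `(E Z²)³ ≤ (E |Z|)² E Z⁴`, the centring gives `E |Z| = 2 E Z⁺`, and a
third Cauchy–Schwarz step gives `(E Z⁺)² ≤ P(Z ≥ 0) E Z²`. -/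
lemma sq_sum_mul_sq_le_four_mul_of_sum_mul_eq_zero {ι : Type*} (s : Finset ι) {w Z : ι → ℝ}
    (hw : ∀ i ∈ s, 0 ≤ w i) (hZ : ∑ i ∈ s, w i * Z i = 0) :
    (∑ i ∈ s, w i * Z i ^ 2) ^ 2 ≤
      4 * (∑ i ∈ s, w i * Z i ^ 4) * ∑ i ∈ s, w i * if 0 ≤ Z i then 1 else 0 := by
  set B := ∑ i ∈ s, w i * Z i ^ 2
  set D := ∑ i ∈ s, w i * Z i ^ 4
  set P := ∑ i ∈ s, w i * if 0 ≤ Z i then 1 else 0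
  set A := ∑ i ∈ s, w i * |Z i|
  set C := ∑ i ∈ s, w i * |Z i| ^ 3
  set Zp := ∑ i ∈ s, w i * max (Z i) 0
  have hind : ∀ i ∈ s, 0 ≤ w i * if 0 ≤ Z i then 1 else 0 := fun i hi =>
    mul_nonneg (hw i hi) (by split_ifs <;> norm_num)
  have hA : A = 2 * Zp := by
    have h : ∀ i, w i * |Z i| = 2 * (w i * max (Z i) 0) - w i * Z i := fun i => by
      rcases le_total 0 (Z i) with h | h
      · rw [abs_of_nonneg h, max_eq_left h]; ring
      · rw [abs_of_nonpos h, max_eq_right h]; ring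
    simp only [A, Zp, h, sum_sub_distrib, ← mul_sum, hZ, sub_zero]
  have hBA : B ^ 2 ≤ A * C := sum_sq_le_sum_mul_sum_of_sq_le_mul s
    (fun i hi => mul_nonneg (hw i hi) (abs_nonneg _))
    (fun i hi => mul_nonneg (hw i hi) (pow_nonneg (abs_nonneg _) 3))
    (fun i _ => le_of_eq (by rw [← sq_abs (Z i)]; ring))
  have hCD : C ^ 2 ≤ B * D := sum_sq_le_sum_mul_sum_of_sq_le_mul s
    (fun i hi => mul_nonneg (hw i hi) (sq_nonneg _))
    (fun i hi => mul_nonneg (hw i hi) (by positivity))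
    (fun i _ => le_of_eq (by rw [show Z i ^ 4 = (Z i ^ 2) ^ 2 by ring, ← sq_abs (Z i)]; ring))
  have hZp : Zp ^ 2 ≤ P * B := sum_sq_le_sum_mul_sum_of_sq_le_mul s hind
    (fun i hi => mul_nonneg (hw i hi) (sq_nonneg _))
    (fun i hi => by
      rcases le_total 0 (Z i) with h | h
      · rw [max_eq_left h, if_pos h]; ring_nf; rfl
      · rw [max_eq_right h, mul_zero, sq, zero_mul]
        exact mul_nonneg (hind i hi) (mul_nonneg (hw i hi) (sq_nonneg _)))
  have hB : 0 ≤ B := sum_nonneg fun i hi => mul_nonneg (hw i hi) (sq_nonneg _)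
  have hD : 0 ≤ D := sum_nonneg fun i hi => mul_nonneg (hw i hi) (by positivity)
  have hP : 0 ≤ P := sum_nonneg hind
  rcases hB.eq_or_lt with hB0 | hBpos
  · rw [← hB0, sq, zero_mul]
    positivity
  have key : B ^ 2 * B ^ 2 ≤ (4 * D * P) * B ^ 2 :=
    calc B ^ 2 * B ^ 2 ≤ (A * C) ^ 2 := by nlinarith
      _ = A ^ 2 * C ^ 2 := by ring
      _ ≤ A ^ 2 * (B * D) := mul_le_mul_of_nonneg_left hCD (sq_nonneg A)
      _ = 4 * Zp ^ 2 * B * D := by rw [hA]; ring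
      _ ≤ 4 * (P * B) * B * D := by gcongr
      _ = (4 * D * P) * B ^ 2 := by ring
  exact le_of_mul_le_mul_right key (by positivity)

def bitStrings : ℕ → Finset (List Bool)
  | 0 => {[]}
  | n + 1 => (bitStrings n).image (List.cons true) ∪ (bitStrings n).image (List.cons false)

lemma mem_bitStrings {n : ℕ} {l : List Bool} : l ∈ bitStrings n ↔ l.length = n := by
  induction n generalizing l with
  | zero => simp [bitStrings, List.length_eq_zero_iff]
  | succ n ih =>
    cases l with
    | nil => simp [bitStrings]
    | cons b t => cases b <;> simp [bitStrings, ih]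

lemma sum_bitStrings_succ {M : Type*} [AddCommMonoid M] (n : ℕ) (F : List Bool → M) :
    ∑ l ∈ bitStrings (n + 1), F l = ∑ l ∈ bitStrings n, (F (true :: l) + F (false :: l)) := by
  rw [bitStrings, sum_union, sum_image (by simp), sum_image (by simp), sum_add_distrib]
  simp [disjoint_left]

lemma sum_bitStrings_add {M : Type*} [AddCommMonoid M] (t u : ℕ) (F : List Bool → M) :
    ∑ l ∈ bitStrings (t + u), F l = ∑ l₁ ∈ bitStrings t, ∑ l₂ ∈ bitStrings u, F (l₁ ++ l₂) := by
  induction t generalizing F with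
  | zero => simp [bitStrings]
  | succ t ih =>
    rw [Nat.add_right_comm, sum_bitStrings_succ, ih, sum_bitStrings_succ]
    simp [sum_add_distrib]

def stepWeight (v : ℝ) (b : Bool) : ℝ := if b then v else 1 - v

def pathWeight (v : ℝ) (l : List Bool) : ℝ := (l.map (stepWeight v)).prod

/-- Expectation over the first `n` steps of the walk with i.i.d. Bernoulli(`v`) steps, a path
being the list of its steps. -/
def pathExpect (v : ℝ) (n : ℕ) (F : List Bool → ℝ) : ℝ :=
  ∑ l ∈ bitStrings n, pathWeight v l * F l

open Classical in
def pathProb (v : ℝ) (n : ℕ) (P : List Bool → Prop) : ℝ :=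
  pathExpect v n fun l => if P l then 1 else 0

section PathSpace

variable {v : ℝ} {n : ℕ}

@[simp] lemma pathWeight_nil : pathWeight v [] = 1 := rfl

@[simp] lemma pathWeight_cons (b : Bool) (l : List Bool) :
    pathWeight v (b :: l) = stepWeight v b * pathWeight v l := List.prod_cons

lemma pathWeight_append (l₁ l₂ : List Bool) :
    pathWeight v (l₁ ++ l₂) = pathWeight v l₁ * pathWeight v l₂ := by
  simp [pathWeight]

lemma stepWeight_nonneg (hv0 : 0 ≤ v) (hv1 : v ≤ 1) (b : Bool) : 0 ≤ stepWeight v b := by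
  cases b <;> simp [stepWeight] <;> linarith

lemma pathWeight_nonneg (hv0 : 0 ≤ v) (hv1 : v ≤ 1) (l : List Bool) : 0 ≤ pathWeight v l :=
  List.prod_nonneg fun _ hx => by
    obtain ⟨b, -, rfl⟩ := List.mem_map.1 hx
    exact stepWeight_nonneg hv0 hv1 b

lemma pathExpect_succ (F : List Bool → ℝ) :
    pathExpect v (n + 1) F =
      v * pathExpect v n (fun l => F (true :: l)) +
        (1 - v) * pathExpect v n (fun l => F (false :: l)) := by
  simp only [pathExpect, sum_bitStrings_succ, sum_add_distrib, mul_sum, pathWeight_cons,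
    stepWeight]
  simp [mul_assoc]

lemma pathExpect_append {t u : ℕ} (F : List Bool → ℝ) :
    pathExpect v (t + u) F = pathExpect v t fun l₁ => pathExpect v u fun l₂ => F (l₁ ++ l₂) := by
  simp only [pathExpect, sum_bitStrings_add, pathWeight_append, mul_sum, mul_assoc]

lemma pathExpect_const (c : ℝ) : pathExpect v n (fun _ => c) = c := by
  induction n with
  | zero => simp [pathExpect, bitStrings]
  | succ n ih => rw [pathExpect_succ, ih]; ring

lemma pathExpect_mono (hv0 : 0 ≤ v) (hv1 : v ≤ 1) {F G : List Bool → ℝ}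
    (h : ∀ l ∈ bitStrings n, F l ≤ G l) : pathExpect v n F ≤ pathExpect v n G :=
  sum_le_sum fun l hl => mul_le_mul_of_nonneg_left (h l hl) (pathWeight_nonneg hv0 hv1 l)

lemma pathExpect_add (F G : List Bool → ℝ) :
    pathExpect v n (fun l => F l + G l) = pathExpect v n F + pathExpect v n G := by
  simp only [pathExpect, mul_add, sum_add_distrib]

lemma pathExpect_const_mul (c : ℝ) (F : List Bool → ℝ) :
    pathExpect v n (fun l => c * F l) = c * pathExpect v n F := by
  simp only [pathExpect, mul_sum, mul_left_comm]

lemma pathProb_succ (P : List Bool → Prop) :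
    pathProb v (n + 1) P =
      v * pathProb v n (fun l => P (true :: l)) +
        (1 - v) * pathProb v n (fun l => P (false :: l)) :=
  pathExpect_succ _

lemma pathProb_nonneg (hv0 : 0 ≤ v) (hv1 : v ≤ 1) (P : List Bool → Prop) :
    0 ≤ pathProb v n P := by
  refine (pathExpect_const (v := v) (n := n) 0).symm.le.trans
    (pathExpect_mono hv0 hv1 fun l _ => ?_)
  split_ifs <;> norm_num

lemma pathProb_mono (hv0 : 0 ≤ v) (hv1 : v ≤ 1) {P Q : List Bool → Prop}
    (h : ∀ l ∈ bitStrings n, P l → Q l) : pathProb v n P ≤ pathProb v n Q :=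
  pathExpect_mono hv0 hv1 fun l hl => by
    split_ifs with hP hQ <;> first | exact absurd (h l hl hP) hQ | norm_num

lemma pathProb_le_add (hv0 : 0 ≤ v) (hv1 : v ≤ 1) {P Q R : List Bool → Prop}
    (h : ∀ l, P l → Q l ∨ R l) : pathProb v n P ≤ pathProb v n Q + pathProb v n R := by
  rw [pathProb, pathProb, pathProb, ← pathExpect_add]
  refine pathExpect_mono hv0 hv1 fun l _ => ?_
  by_cases hP : P l
  · rcases h l hP with hQ | hR <;> simp only [hP, ‹_›, if_true] <;> split_ifs <;> norm_num
  · simp only [hP, if_false]; split_ifs <;> norm_num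

lemma pathWeight_le_pathProb (hv0 : 0 ≤ v) (hv1 : v ≤ 1) {P : List Bool → Prop} {l : List Bool}
    (hl : l ∈ bitStrings n) (hP : P l) : pathWeight v l ≤ pathProb v n P := by
  classical
  refine (single_le_sum (f := fun l => pathWeight v l * if P l then 1 else 0) (fun l _ => ?_)
    hl).trans_eq' (by simp [hP])
  exact mul_nonneg (pathWeight_nonneg hv0 hv1 l) (by split_ifs <;> norm_num)

/-- The Markov property of the walk at time `t`. -/
lemma mul_pathProb_le_pathProb_append (hv0 : 0 ≤ v) (hv1 : v ≤ 1) {t u : ℕ} {c : ℝ}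
    {P R : List Bool → Prop} {Q : List Bool → List Bool → Prop}
    (hQ : ∀ l₁ ∈ bitStrings t, P l₁ → c ≤ pathProb v u (Q l₁))
    (hR : ∀ l₁ ∈ bitStrings t, ∀ l₂, P l₁ → Q l₁ l₂ → R (l₁ ++ l₂)) :
    c * pathProb v t P ≤ pathProb v (t + u) R := by
  rw [pathProb, pathProb, pathExpect_append, ← pathExpect_const_mul]
  refine pathExpect_mono hv0 hv1 fun l₁ hl₁ => ?_
  split_ifs with hP
  · refine (mul_one c).trans_le ((hQ l₁ hl₁ hP).trans (pathExpect_mono hv0 hv1 fun l₂ _ => ?_))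
    split_ifs with hq hr <;> first | exact absurd (hR l₁ hl₁ l₂ hP hq) hr | norm_num
  · rw [mul_zero]
    exact pathProb_nonneg hv0 hv1 _

end PathSpace

def bitWalk (l : List Bool) (k : ℕ) : ℝ := ∑ j ∈ range k, ((l.getD j false).toNat : ℝ)

def centredWalk (v : ℝ) (l : List Bool) (k : ℕ) : ℝ := bitWalk l k - v * k

section Walk

variable {v : ℝ} {n : ℕ}

@[simp] lemma centredWalk_zero (l : List Bool) : centredWalk v l 0 = 0 := by
  simp [centredWalk, bitWalk]

lemma centredWalk_cons_succ (b : Bool) (l : List Bool) (k : ℕ) :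
    centredWalk v (b :: l) (k + 1) = (b.toNat - v) + centredWalk v l k := by
  simp only [centredWalk, bitWalk, sum_range_succ', List.getD_cons_succ, List.getD_cons_zero]
  push_cast; ring

lemma bitWalk_append_of_le {l₁ : List Bool} (l₂ : List Bool) {k : ℕ} (hk : k ≤ l₁.length) :
    bitWalk (l₁ ++ l₂) k = bitWalk l₁ k :=
  sum_congr rfl fun j hj => by rw [List.getD_append _ _ _ _ (by simp at hj; omega)]

lemma centredWalk_append_of_le {l₁ : List Bool} (l₂ : List Bool) {k : ℕ} (hk : k ≤ l₁.length) :
    centredWalk v (l₁ ++ l₂) k = centredWalk v l₁ k := by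
  rw [centredWalk, centredWalk, bitWalk_append_of_le l₂ hk]

lemma centredWalk_append (l₁ l₂ : List Bool) (j : ℕ) :
    centredWalk v (l₁ ++ l₂) (l₁.length + j) =
      centredWalk v l₁ l₁.length + centredWalk v l₂ j := by
  simp only [centredWalk, bitWalk, sum_range_add]
  rw [sum_congr rfl fun i hi => by rw [List.getD_append _ _ _ _ (by simpa using hi)]]
  simp only [List.getD_append_right _ _ _ _ (Nat.le_add_right _ _), Nat.add_sub_cancel_left]
  push_cast; ring

lemma bitWalk_replicate_true {s k : ℕ} (hk : k ≤ s) : bitWalk (List.replicate s true) k = k := by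
  rw [bitWalk, sum_congr rfl fun j hj => by rw [List.getD_replicate _ (by simp at hj; omega)]]
  simp

lemma pathExpect_add_centredWalk (x : ℝ) :
    pathExpect v n (fun l => x + centredWalk v l n) = x := by
  induction n generalizing x with
  | zero => simp [pathExpect, bitStrings]
  | succ n ih =>
    simp only [pathExpect_succ, centredWalk_cons_succ, ← add_assoc, ih]
    simp; ring

lemma pathExpect_add_centredWalk_sq (x : ℝ) :
    pathExpect v n (fun l => (x + centredWalk v l n) ^ 2) = x ^ 2 + n * (v * (1 - v)) := by
  induction n generalizing x with
  | zero => simp [pathExpect, bitStrings]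
  | succ n ih =>
    simp only [pathExpect_succ, centredWalk_cons_succ, ← add_assoc, ih]
    simp; ring

lemma pathExpect_add_centredWalk_pow_four (x : ℝ) :
    pathExpect v n (fun l => (x + centredWalk v l n) ^ 4) =
      x ^ 4 + 6 * x ^ 2 * (n * (v * (1 - v))) + 4 * x * (n * (v * (1 - v) * (1 - 2 * v)))
        + n * (v * (1 - v) * (1 - 3 * (v * (1 - v)))) + 3 * n * (n - 1) * (v * (1 - v)) ^ 2 := by
  induction n generalizing x with
  | zero => simp [pathExpect, bitStrings]
  | succ n ih =>
    simp only [pathExpect_succ, centredWalk_cons_succ, ← add_assoc, ih]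
    simp; ring

lemma pathExpect_centredWalk : pathExpect v n (fun l => centredWalk v l n) = 0 := by
  simpa using pathExpect_add_centredWalk (v := v) (n := n) 0

lemma pathExpect_centredWalk_sq :
    pathExpect v n (fun l => centredWalk v l n ^ 2) = n * (v * (1 - v)) := by
  simpa using pathExpect_add_centredWalk_sq (v := v) (n := n) 0

lemma pathExpect_centredWalk_pow_four_le (hv0 : 0 ≤ v) (hv1 : v ≤ 1) :
    pathExpect v n (fun l => centredWalk v l n ^ 4) ≤
      n * (v * (1 - v)) + 3 * (n * (v * (1 - v))) ^ 2 := by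
  have h := pathExpect_add_centredWalk_pow_four (v := v) (n := n) 0
  simp only [zero_add] at h
  rw [h]
  have hσ : 0 ≤ v * (1 - v) := mul_nonneg hv0 (by linarith)
  nlinarith [mul_nonneg n.cast_nonneg (mul_nonneg hσ hσ)]

lemma exists_le_succ_le_abs_centredWalk_cons {lam x : ℝ} (b : Bool) (l : List Bool) :
    (∃ k ≤ n + 1, lam ≤ |x + centredWalk v (b :: l) k|) ↔
      lam ≤ |x| ∨ ∃ k ≤ n, lam ≤ |x + (b.toNat - v) + centredWalk v l k| := by
  constructor
  · rintro ⟨_ | k, hk, hlam⟩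
    · simpa using Or.inl hlam
    · rw [centredWalk_cons_succ, ← add_assoc] at hlam
      exact Or.inr ⟨k, by omega, hlam⟩
  · rintro (hlam | ⟨k, hk, hlam⟩)
    · exact ⟨0, by omega, by simpa using hlam⟩
    · exact ⟨k + 1, by omega, by rwa [centredWalk_cons_succ, ← add_assoc]⟩

/-- Kolmogorov's maximal inequality for the walk started at `x`. The bound `x ^ 2 + n σ²` is
harmonic for the walk and at least `lam ^ 2` outside `(-lam, lam)`, which is all the induction on
`n` needs. -/
lemma sq_mul_pathProb_exit_le (hv0 : 0 ≤ v) (hv1 : v ≤ 1) {lam : ℝ} (hlam : 0 ≤ lam) (x : ℝ) :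
    lam ^ 2 * pathProb v n (fun l => ∃ k ≤ n, lam ≤ |x + centredWalk v l k|) ≤
      x ^ 2 + n * (v * (1 - v)) := by
  have hsq : ∀ y : ℝ, lam ≤ |y| → lam ^ 2 ≤ y ^ 2 := fun y h => by nlinarith [sq_abs y]
  induction n generalizing x with
  | zero =>
    simp only [pathProb, pathExpect, bitStrings, sum_singleton, pathWeight_nil, one_mul,
      nonpos_iff_eq_zero, exists_eq_left, centredWalk_zero, add_zero, CharP.cast_eq_zero,
      zero_mul]
    split_ifs with h
    · simpa using hsq x h
    · simpa using sq_nonneg x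
  | succ n ih =>
    by_cases hx : lam ≤ |x|
    · have hexit : ∀ l : List Bool, ∃ k ≤ n + 1, lam ≤ |x + centredWalk v l k| :=
        fun l => ⟨0, by omega, by simpa using hx⟩
      simp only [pathProb, hexit, if_true, pathExpect_const, mul_one]
      have hσ : 0 ≤ v * (1 - v) := mul_nonneg hv0 (by linarith)
      push_cast
      nlinarith [hsq x hx, mul_nonneg n.cast_nonneg hσ]
    · have h1 := mul_le_mul_of_nonneg_left (ih (x + ((true.toNat : ℝ) - v))) hv0
      have h0 := mul_le_mul_of_nonneg_left (ih (x + ((false.toNat : ℝ) - v))) (sub_nonneg.2 hv1)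
      rw [pathProb_succ]
      simp only [exists_le_succ_le_abs_centredWalk_cons, hx, false_or]
      simp only [Bool.toNat_true, Bool.toNat_false, Nat.cast_one, CharP.cast_eq_zero] at h1 h0 ⊢
      push_cast
      linear_combination h1 + h0

lemma one_div_sixteen_le_pathProb_nonneg_mul_centredWalk (hv0 : 0 ≤ v) (hv1 : v ≤ 1) {e : ℝ}
    (he : e ≠ 0) (hn : 1 ≤ n * (v * (1 - v))) :
    1 / 16 ≤ pathProb v n (fun l => 0 ≤ e * centredWalk v l n) := by
  set σ2 := n * (v * (1 - v))
  set P := pathProb v n (fun l => 0 ≤ e * centredWalk v l n)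
  have hmean : pathExpect v n (fun l => e * centredWalk v l n) = 0 := by
    rw [pathExpect_const_mul, pathExpect_centredWalk, mul_zero]
  have h2 : pathExpect v n (fun l => (e * centredWalk v l n) ^ 2) = e ^ 2 * σ2 := by
    simp only [mul_pow e]; rw [pathExpect_const_mul, pathExpect_centredWalk_sq]
  have h4 : pathExpect v n (fun l => (e * centredWalk v l n) ^ 4) ≤ e ^ 4 * (4 * σ2 ^ 2) := by
    simp only [mul_pow e]; rw [pathExpect_const_mul]
    refine mul_le_mul_of_nonneg_left ((pathExpect_centredWalk_pow_four_le hv0 hv1).trans ?_)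
      (by positivity)
    nlinarith
  have hPZ : pathExpect v n (fun l => (e * centredWalk v l n) ^ 2) ^ 2 ≤
      4 * pathExpect v n (fun l => (e * centredWalk v l n) ^ 4) * P :=
    sq_sum_mul_sq_le_four_mul_of_sum_mul_eq_zero _ (fun l _ => pathWeight_nonneg hv0 hv1 l) hmean
  have hP : 0 ≤ P := pathProb_nonneg hv0 hv1 _
  have hpos : 0 < e ^ 4 * σ2 ^ 2 := by
    have : 0 < σ2 := by linarith
    positivity
  have key : e ^ 4 * σ2 ^ 2 * 1 ≤ e ^ 4 * σ2 ^ 2 * (16 * P) :=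
    calc e ^ 4 * σ2 ^ 2 * 1 = (e ^ 2 * σ2) ^ 2 := by ring
      _ ≤ _ := h2 ▸ hPZ
      _ ≤ 4 * (e ^ 4 * (4 * σ2 ^ 2)) * P := by gcongr
      _ = _ := by ring
  linarith [le_of_mul_le_mul_left key hpos]

lemma one_div_thirty_two_le_pathProb_abs_lt_and_nonneg_mul (hv0 : 0 ≤ v) (hv1 : v ≤ 1)
    {e lam : ℝ} (he : e ≠ 0) (hlam : 0 ≤ lam) (hn : 1 ≤ n * (v * (1 - v)))
    (hnlam : 32 * (n * (v * (1 - v))) ≤ lam ^ 2) :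
    1 / 32 ≤ pathProb v n
      (fun l => (∀ k ≤ n, |centredWalk v l k| < lam) ∧ 0 ≤ e * centredWalk v l n) := by
  have hsign := one_div_sixteen_le_pathProb_nonneg_mul_centredWalk hv0 hv1 he hn
  have hexit : pathProb v n (fun l => ∃ k ≤ n, lam ≤ |centredWalk v l k|) ≤ 1 / 32 := by
    have h := sq_mul_pathProb_exit_le (n := n) hv0 hv1 hlam 0
    simp only [zero_add, ne_eq, OfNat.ofNat_ne_zero, not_false_eq_true, zero_pow] at h
    have hlam2 : 0 < lam ^ 2 := by nlinarith
    rw [← mul_le_mul_iff_of_pos_left hlam2]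
    linarith
  have hsplit := pathProb_le_add (n := n) hv0 hv1
    (P := fun l => 0 ≤ e * centredWalk v l n)
    (Q := fun l => (∀ k ≤ n, |centredWalk v l k| < lam) ∧ 0 ≤ e * centredWalk v l n)
    (R := fun l => ∃ k ≤ n, lam ≤ |centredWalk v l k|) fun l hl => by
      by_cases h : ∀ k ≤ n, |centredWalk v l k| < lam
      · exact Or.inl ⟨h, hl⟩
      · push Not at h; exact Or.inr h
  linarith

end Walk

/-- On `[0, s]` the barriers of the theorem pin the walk to `S_k = k`; afterwards the compensated
barriers are relaxed to the band `[v, a]`. -/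
def InTube (v a : ℝ) (s n : ℕ) (l : List Bool) : Prop :=
  (∀ k ≤ s, bitWalk l k = k) ∧
    ∀ k, s < k → k ≤ n → v ≤ centredWalk v l k ∧ centredWalk v l k ≤ a

section Tube

variable {v : ℝ}

lemma add_mem_Icc_of_abs_lt {a x y : ℝ} (hx : x ∈ Set.Icc (a / 3) (2 * a / 3)) (hy : |y| < a / 8)
    (hsign : 0 ≤ (if x ≤ a / 2 then 1 else -1) * y) : x + y ∈ Set.Icc (a / 3) (2 * a / 3) := by
  obtain ⟨hx1, hx2⟩ := hx
  obtain ⟨hy1, hy2⟩ := abs_lt.1 hy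
  split_ifs at hsign with h <;> constructor <;> linarith

lemma InTube.append (hv : v ≤ 1) {a : ℝ} (ha : 5 ≤ a) {s t N : ℕ} {l₁ l₂ : List Bool}
    (hl₁ : l₁.length = t) (hst : s ≤ t) (h₁ : InTube v a s t l₁)
    (hmid : centredWalk v l₁ t ∈ Set.Icc (a / 3) (2 * a / 3))
    (hstay : ∀ k ≤ N, |centredWalk v l₂ k| < a / 8) : InTube v a s (t + N) (l₁ ++ l₂) := by
  refine ⟨fun k hk => by rw [bitWalk_append_of_le l₂ (by omega)]; exact h₁.1 k hk,
    fun k hsk hkN => ?_⟩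
  rcases le_or_gt k t with hkt | hkt
  · rw [centredWalk_append_of_le l₂ (by omega)]
    exact h₁.2 k hsk hkt
  · obtain ⟨j, rfl⟩ := Nat.exists_eq_add_of_lt hkt
    rw [show t + j + 1 = l₁.length + (j + 1) by omega, centredWalk_append, hl₁]
    obtain ⟨hy1, hy2⟩ := abs_lt.1 (hstay (j + 1) (by omega))
    constructor <;> linarith [hmid.1, hmid.2]

lemma pow_mul_pow_le_pathProb_inTube (hv0 : 0 ≤ v) (hv1 : v ≤ 1) {a : ℝ} (ha : 5 ≤ a)
    {s N : ℕ} (hs : (1 - v) * s ∈ Set.Icc (a / 3) (2 * a / 3)) (hN : 1 ≤ N * (v * (1 - v)))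
    (hNa : 2048 * (N * (v * (1 - v))) ≤ a ^ 2) (B : ℕ) :
    v ^ s * (1 / 32) ^ B ≤ pathProb v (s + B * N) fun l =>
      InTube v a s (s + B * N) l ∧ centredWalk v l (s + B * N) ∈ Set.Icc (a / 3) (2 * a / 3) := by
  induction B with
  | zero =>
    have hw : pathWeight v (List.replicate s true) = v ^ s := by simp [pathWeight, stepWeight]
    simp only [pow_zero, mul_one, zero_mul, add_zero, ← hw]
    refine pathWeight_le_pathProb hv0 hv1 (mem_bitStrings.2 (List.length_replicate ..))
      ⟨⟨fun k hk => bitWalk_replicate_true hk, fun k hsk hks => absurd hks (by omega)⟩, ?_⟩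
    rwa [centredWalk, bitWalk_replicate_true le_rfl, ← one_sub_mul]
  | succ B ih =>
    rw [show s + (B + 1) * N = s + B * N + N by ring,
      show v ^ s * (1 / 32) ^ (B + 1) = 1 / 32 * (v ^ s * (1 / 32) ^ B) by ring]
    refine (mul_le_mul_of_nonneg_left ih (by norm_num)).trans ?_
    -- the block must end on the side of its start facing the centre `a / 2` of the band
    refine mul_pathProb_le_pathProb_append hv0 hv1
      (Q := fun l₁ l₂ => (∀ k ≤ N, |centredWalk v l₂ k| < a / 8) ∧
        0 ≤ (if centredWalk v l₁ (s + B * N) ≤ a / 2 then 1 else -1) * centredWalk v l₂ N)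
      (fun l₁ _ _ => one_div_thirty_two_le_pathProb_abs_lt_and_nonneg_mul hv0 hv1
        (by split_ifs <;> norm_num) (by linarith) hN (by nlinarith))
      fun l₁ hl₁ l₂ ⟨hin, hmid⟩ ⟨hstay, hsign⟩ => ?_
    have hl₁ := mem_bitStrings.1 hl₁
    refine ⟨hin.append hv1 ha hl₁ (Nat.le_add_right _ _) hmid hstay, ?_⟩
    rw [← hl₁, centredWalk_append, hl₁]
    exact add_mem_Icc_of_abs_lt hmid (hstay N le_rfl) hsign

end Tube

def InBarriers (v : ℝ) (A m : ℕ) (l : List Bool) : Prop :=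
  ∀ k ≤ m, gBar v A m k ≤ bitWalk l k ∧ bitWalk l k ≤ dBar v m k

section Barriers

variable {v : ℝ}

lemma InTube.inBarriers (hv0 : 0 ≤ v) {A m n : ℕ} {l : List Bool}
    (h : InTube v (am m) (sm v m) n l) (hmn : m ≤ n) : InBarriers v A m l := by
  intro k hk
  by_cases hks : k ≤ sm v m
  · simp [gBar, dBar, hks, h.1 k hks]
  · obtain ⟨hlow, hup⟩ := h.2 k (by omega) (by omega)
    rw [centredWalk] at hlow hup
    have hAa : (0 : ℝ) ≤ A * am m := by positivity
    simp only [gBar, dBar, hks, if_false]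
    split_ifs <;> constructor <;> nlinarith

lemma one_sub_mul_sm_mem_Icc (hv0 : 0 ≤ v) (hv1 : v < 1) {m : ℕ} (ha : 6 ≤ am m) :
    (1 - v) * sm v m ∈ Set.Icc ((am m : ℝ) / 3) (2 * am m / 3) := by
  have hc : 0 < 2 * (1 - v) := by linarith
  have h1 : (sm v m : ℝ) ≤ am m / (2 * (1 - v)) := Nat.floor_le (by positivity)
  have h2 : (am m : ℝ) / (2 * (1 - v)) - 1 < sm v m := Nat.sub_one_lt_floor _
  have ha' : (6 : ℝ) ≤ am m := by exact_mod_cast ha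
  have hdiv : (1 - v) * ((am m : ℝ) / (2 * (1 - v))) = am m / 2 := by
    field_simp [(by linarith : 0 < 1 - v).ne']
  constructor <;> nlinarith

lemma sm_le_mul_am {K : ℕ} (hK : 1 / (2 * (1 - v)) ≤ K) (m : ℕ) : sm v m ≤ K * am m := by
  refine Nat.floor_le_of_le ?_
  rw [div_eq_mul_one_div, mul_comm]
  push_cast
  exact mul_le_mul_of_nonneg_right hK (Nat.cast_nonneg _)

end Barriers

lemma am_le_rpow (m : ℕ) : (am m : ℝ) ≤ (m : ℝ) ^ ((1 : ℝ) / 3) := Nat.floor_le (by positivity)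

lemma lt_am_add_one_pow_three (m : ℕ) : m < (am m + 1) ^ 3 := by
  have h : (m : ℝ) ^ ((1 : ℝ) / 3) < am m + 1 := Nat.lt_floor_add_one _
  have hm : ((m : ℝ) ^ ((1 : ℝ) / 3)) ^ 3 = m := by
    rw [← Real.rpow_natCast, ← Real.rpow_mul (by positivity)]; norm_num
  exact_mod_cast hm ▸ pow_lt_pow_left₀ h (by positivity) three_ne_zero

lemma tendsto_am_atTop : Tendsto am atTop atTop :=
  tendsto_nat_floor_atTop.comp
    ((tendsto_rpow_atTop (by norm_num)).comp tendsto_natCast_atTop_atTop)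

lemma mul_self_le_mul_div {a : ℕ} (ha : 32 ≤ a) : a * a ≤ 1024 * (a * a / 512) := by
  have h1 : 512 * (a * a / 512) + a * a % 512 = a * a := Nat.div_add_mod _ _
  have h2 : a * a % 512 < 512 := Nat.mod_lt _ (by norm_num)
  nlinarith

lemma div_add_one_le_mul {a m N : ℕ} (ha : 1 ≤ a) (hN : a * a ≤ 1024 * N)
    (hm : m < (a + 1) ^ 3) : m / N + 1 ≤ 8193 * a := by
  have h1 : a * a * (m / N) ≤ 1024 * m := by nlinarith [Nat.div_mul_le_self m N]
  have h2 : a * a * (m / N) < a * a * (8192 * a) := by nlinarith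
  have h3 : m / N < 8192 * a := lt_of_mul_lt_mul_left h2 (Nat.zero_le _)
  omega

lemma exists_pow_le_pathProb_inBarriers {v : ℝ} (hv0 : 0 < v) (hv1 : v < 1) (A : ℕ) {m : ℕ}
    (ha : 32 ≤ am m) (haσ : 1024 ≤ (am m : ℝ) ^ 2 * (v * (1 - v))) :
    ∃ n ≥ m, ∃ B ≤ 8193 * am m,
      v ^ sm v m * (1 / 32) ^ B ≤ pathProb v n (InBarriers v A m) := by
  set a := am m
  set N := a * a / 512
  have hN1 : a * a ≤ 1024 * N := mul_self_le_mul_div ha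
  have hN1' : (a : ℝ) ^ 2 ≤ 1024 * N := by rw [sq]; exact_mod_cast hN1
  have hN2 : (512 * N : ℝ) ≤ a ^ 2 := by rw [sq]; exact_mod_cast Nat.mul_div_le (a * a) 512
  have hN0 : 0 < N := by nlinarith
  have hmn : m ≤ sm v m + (m / N + 1) * N := by nlinarith [Nat.lt_div_mul_add (a := m) hN0]
  have hσ : 0 ≤ v * (1 - v) := by nlinarith
  have hσ4 : v * (1 - v) ≤ 1 / 4 := by nlinarith [sq_nonneg (1 - 2 * v)]
  refine ⟨_, hmn, m / N + 1,
    div_add_one_le_mul (by omega) hN1 (lt_am_add_one_pow_three m), ?_⟩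
  refine (pow_mul_pow_le_pathProb_inTube hv0.le hv1.le (a := a) (N := N) (by norm_cast; omega)
    (one_sub_mul_sm_mem_Icc hv0.le hv1 (by omega))
    (by nlinarith [mul_le_mul_of_nonneg_right hN1' hσ]) (by nlinarith) _).trans ?_
  exact pathProb_mono hv0.le hv1.le fun l _ hl => hl.1.inBarriers hv0.le hmn

lemma exp_mul_log_le_pow {q x : ℝ} (hq0 : 0 < q) (hq1 : q ≤ 1) {j : ℕ} (hj : (j : ℝ) ≤ x) :
    Real.exp (Real.log q * x) ≤ q ^ j := by
  rw [← Real.exp_log hq0, ← Real.exp_nat_mul, Real.log_exp, Real.exp_le_exp]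
  nlinarith [Real.log_nonpos hq0.le hq1]

lemma exists_exp_le_pathProb_inBarriers {v : ℝ} (hv0 : 0 < v) (hv1 : v < 1) (A : ℕ) :
    ∃ ζ : ℝ, 0 < ζ ∧ ∀ᶠ m : ℕ in atTop, ∃ n ≥ m,
      Real.exp (-ζ * (m : ℝ) ^ ((1 : ℝ) / 3)) ≤ pathProb v n (InBarriers v A m) := by
  obtain ⟨K, hK⟩ := exists_nat_ge (1 / (2 * (1 - v)))
  obtain ⟨a₀, ha₀⟩ := exists_nat_ge (1024 / (v * (1 - v)))
  have hσ : 0 < v * (1 - v) := by nlinarith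
  set q := min v (1 / 32)
  have hq0 : 0 < q := lt_min hv0 (by norm_num)
  have hq1 : q < 1 := (min_le_right _ _).trans_lt (by norm_num)
  refine ⟨-((K + 8193) * Real.log q), by nlinarith [Real.log_neg hq0 hq1], ?_⟩
  filter_upwards [tendsto_am_atTop.eventually_ge_atTop (max a₀ 32)] with m hm
  have ha32 : 32 ≤ am m := le_of_max_le_right hm
  have haσ : 1024 ≤ (am m : ℝ) ^ 2 * (v * (1 - v)) := by
    have h1 : (a₀ : ℝ) ≤ am m := by exact_mod_cast le_of_max_le_left hm
    have h2 : (1 : ℝ) ≤ am m := by exact_mod_cast (by omega : 1 ≤ am m)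
    rw [div_le_iff₀ hσ] at ha₀
    nlinarith [mul_le_mul_of_nonneg_right h1 hσ.le,
      mul_le_mul_of_nonneg_right (by nlinarith : (am m : ℝ) ≤ am m ^ 2) hσ.le]
  obtain ⟨n, hmn, B, hB, hprob⟩ := exists_pow_le_pathProb_inBarriers hv0 hv1 A ha32 haσ
  refine ⟨n, hmn, le_trans ?_ hprob⟩
  calc Real.exp (-(-((K + 8193) * Real.log q)) * (m : ℝ) ^ ((1 : ℝ) / 3))
      = Real.exp (Real.log q * ((K + 8193) * (m : ℝ) ^ ((1 : ℝ) / 3))) := by ring_nf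
    _ ≤ q ^ ((K + 8193) * am m) := by
      refine exp_mul_log_le_pow hq0 hq1.le ?_
      push_cast
      exact mul_le_mul_of_nonneg_left (am_le_rpow m) (by positivity)
    _ ≤ q ^ (sm v m + B) := pow_le_pow_of_le_one hq0.le hq1.le (by nlinarith [sm_le_mul_am hK m])
    _ ≤ v ^ sm v m * (1 / 32) ^ B := by
      rw [pow_add]
      gcongr
      exacts [min_le_left _ _, min_le_right _ _]

def bitCylinder {Ω : Type*} (ξ : ℕ → Ω → ℤ) (l : List Bool) : Set Ω :=
  ⋂ j ∈ range l.length, ξ j ⁻¹' {((l.getD j false).toNat : ℤ)}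

section Cylinder

variable {Ω : Type*} {ξ : ℕ → Ω → ℤ} {v : ℝ}

lemma walk_eq_bitWalk_of_mem_bitCylinder {l : List Bool} {ω : Ω} (hω : ω ∈ bitCylinder ξ l)
    {k : ℕ} (hk : k ≤ l.length) : (walk ξ k ω : ℝ) = bitWalk l k := by
  simp only [bitCylinder, Set.mem_iInter, Set.mem_preimage, Set.mem_singleton_iff,
    mem_range] at hω
  rw [walk, bitWalk]
  push_cast
  exact sum_congr rfl fun j hj => by rw [hω j (by simp at hj; omega)]; simp

lemma eq_of_mem_bitCylinder {l l' : List Bool} (hlen : l.length = l'.length) {ω : Ω}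
    (hω : ω ∈ bitCylinder ξ l) (hω' : ω ∈ bitCylinder ξ l') : l = l' := by
  simp only [bitCylinder, Set.mem_iInter, Set.mem_preimage, Set.mem_singleton_iff,
    mem_range] at hω hω'
  refine List.ext_getElem hlen fun j hj hj' => ?_
  have h := (hω j hj).symm.trans (hω' j (hlen ▸ hj))
  rw [List.getD_eq_getElem _ _ hj, List.getD_eq_getElem _ _ hj'] at h
  revert h; cases l[j] <;> cases l'[j] <;> simp

lemma bernoulliStep_toNat (v : ℝ) (b : Bool) :
    bernoulliStep v {(b.toNat : ℤ)} = ENNReal.ofReal (stepWeight v b) := by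
  cases b <;> simp [bernoulliStep, stepWeight]

lemma aemeasurable_of_map_eq_bernoulliStep [MeasurableSpace Ω] {μ : Measure Ω} {X : Ω → ℤ}
    (h : μ.map X = bernoulliStep v) : AEMeasurable X μ := by
  by_contra hX
  rw [Measure.map_of_not_aemeasurable hX] at h
  have h1 := congrArg (· {(true.toNat : ℤ)}) h
  have h0 := congrArg (· {(false.toNat : ℤ)}) h
  simp only [bernoulliStep_toNat, Measure.coe_zero, Pi.zero_apply, stepWeight] at h1 h0
  rw [eq_comm, ENNReal.ofReal_eq_zero] at h1 h0
  simp at h1 h0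
  linarith

lemma prod_range_stepWeight (l : List Bool) :
    ∏ j ∈ range l.length, stepWeight v (l.getD j false) = pathWeight v l := by
  induction l with
  | nil => simp
  | cons b l ih => rw [List.length_cons, prod_range_succ', pathWeight_cons, ← ih]; simp [mul_comm]

lemma measure_bitCylinder [MeasureSpace Ω] (hiid : iIndepFun ξ ℙ)
    (hlaw : ∀ n, Measure.map (ξ n) ℙ = bernoulliStep v) (hv0 : 0 ≤ v) (hv1 : v ≤ 1)
    (l : List Bool) : ℙ (bitCylinder ξ l) = ENNReal.ofReal (pathWeight v l) := by
  rw [bitCylinder, hiid.meas_biInter fun j _ => ⟨_, measurableSet_singleton _, rfl⟩,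
    ← prod_range_stepWeight, ENNReal.ofReal_prod_of_nonneg fun j _ => stepWeight_nonneg hv0 hv1 _]
  refine prod_congr rfl fun j _ => ?_
  rw [← bernoulliStep_toNat, ← hlaw j, Measure.map_apply_of_aemeasurable
    (aemeasurable_of_map_eq_bernoulliStep (hlaw j)) (measurableSet_singleton _)]

lemma measure_biUnion_bitCylinder [MeasureSpace Ω] (hiid : iIndepFun ξ ℙ)
    (hlaw : ∀ n, Measure.map (ξ n) ℙ = bernoulliStep v) (hv0 : 0 ≤ v) (hv1 : v ≤ 1) (n : ℕ)
    (P : List Bool → Prop) [DecidablePred P] :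
    ℙ (⋃ l ∈ (bitStrings n).filter P, bitCylinder ξ l) = ENNReal.ofReal (pathProb v n P) := by
  rw [measure_biUnion_finset₀, sum_congr rfl fun l _ => measure_bitCylinder hiid hlaw hv0 hv1 l,
    ← ENNReal.ofReal_sum_of_nonneg fun l _ => pathWeight_nonneg hv0 hv1 l, sum_filter]
  · congr 1
    exact sum_congr rfl fun l _ => by by_cases h : P l <;> simp [h]
  · intro l hl l' hl' hne
    refine (Set.disjoint_left.2 fun ω hω hω' => hne ?_).aedisjoint
    simp only [coe_filter, mem_bitStrings] at hl hl'
    exact eq_of_mem_bitCylinder (hl.1.trans hl'.1.symm) hω hω'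
  · exact fun l _ => .biInter (Set.to_countable _) fun j _ =>
      (aemeasurable_of_map_eq_bernoulliStep (hlaw j)).nullMeasurableSet_preimage
        (measurableSet_singleton _)

end Cylinder

lemma rateFn_zero (p : ℝ) : rateFn p 0 = Real.log (1 - p)⁻¹ := by simp [rateFn]

lemma rateFn_one (p : ℝ) : rateFn p 1 = Real.log p⁻¹ := by simp [rateFn]

lemma mem_Ioo_of_rateFn_eq_log_two {p v : ℝ} (hp0 : 0 < p) (hp1 : p < 1 / 2) (hv0 : 0 ≤ v)
    (hv1 : v ≤ 1) (h : rateFn p v = Real.log 2) : v ∈ Set.Ioo 0 1 := by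
  refine ⟨hv0.lt_of_ne fun h0 => ?_, hv1.lt_of_ne fun h1 => ?_⟩
  · rw [← h0, rateFn_zero] at h
    exact (Real.log_lt_log (by simp; linarith) (by rw [inv_lt_comm₀] <;> linarith)).ne h
  · rw [h1, rateFn_one] at h
    exact (Real.log_lt_log (by norm_num) (by rw [lt_inv_comm₀] <;> linarith)).ne' h

theorem tube_probability_lower_bound_general
    (p : ℝ) (hp0 : 0 < p) (hp1 : p < 1 / 2)
    (vp : ℝ) (hvp0 : 0 ≤ vp) (hvp1 : vp ≤ 1) (hvproot : rateFn p vp = Real.log 2)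
    (A : ℕ)
    (Ω : Type*) [MeasureSpace Ω]
    (ξ : ℕ → Ω → ℤ)
    (hiid : iIndepFun ξ ℙ)
    (hlaw : ∀ n : ℕ, Measure.map (ξ n) ℙ = bernoulliStep vp) :
    ∃ ζ₁ : ℝ, 0 < ζ₁ ∧ ∀ᶠ m : ℕ in atTop,
      ENNReal.ofReal (Real.exp (-ζ₁ * (m : ℝ) ^ ((1 : ℝ) / 3))) ≤
        ℙ {ω | ∀ k ≤ m,
          gBar vp A m k - vp * k ≤ (walk ξ k ω : ℝ) - vp * k ∧
          (walk ξ k ω : ℝ) - vp * k ≤ dBar vp m k - vp * k} := by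
  classical
  obtain ⟨hv0, hv1⟩ := mem_Ioo_of_rateFn_eq_log_two hp0 hp1 hvp0 hvp1 hvproot
  obtain ⟨ζ, hζ, hev⟩ := exists_exp_le_pathProb_inBarriers hv0 hv1 A
  refine ⟨ζ, hζ, hev.mono fun m ⟨n, hmn, hexp⟩ => ?_⟩
  calc ENNReal.ofReal (Real.exp (-ζ * (m : ℝ) ^ ((1 : ℝ) / 3)))
      ≤ ENNReal.ofReal (pathProb vp n (InBarriers vp A m)) := ENNReal.ofReal_le_ofReal hexp
    _ = ℙ (⋃ l ∈ (bitStrings n).filter (InBarriers vp A m), bitCylinder ξ l) :=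
      (measure_biUnion_bitCylinder hiid hlaw hv0.le hv1.le n _).symm
    _ ≤ _ := measure_mono ?_
  simp only [Set.iUnion_subset_iff, mem_filter, mem_bitStrings]
  intro l ⟨hl, hbar⟩ ω hω k hk
  rw [walk_eq_bitWalk_of_mem_bitCylinder hω (by omega), sub_le_sub_iff_right,
    sub_le_sub_iff_right]
  exact hbar k hk

/-- **Lemma (tube probability lower bound):** under the tilted measure `P̂` (i.e. for the
random walk with Bernoulli(`v(p)`) steps), there is `ζ₁ > 0` such that for all large
`m`, the probability that the compensated walk `Ŝ_k = S_k − v(p)·k` stays between the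
compensated barriers `ĝ_m` and `d̂_m` up to time `m` is at least `exp(−ζ₁·m^{1/3})`. -/
theorem tube_probability_lower_bound
    (p : ℝ) (hp0 : 0 < p) (hp1 : p < 1 / 2)
    (vp : ℝ) (hvp0 : 0 ≤ vp) (hvp1 : vp ≤ 1) (hvproot : rateFn p vp = Real.log 2)
    (A : ℕ) (hA : 4 ≤ A)
    (Ω : Type*) [MeasureSpace Ω] [IsProbabilityMeasure (ℙ : Measure Ω)]
    (ξ : ℕ → Ω → ℤ)
    (hiid : iIndepFun ξ ℙ)
    (hlaw : ∀ n : ℕ, Measure.map (ξ n) ℙ = bernoulliStep vp) :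
    ∃ ζ₁ : ℝ, 0 < ζ₁ ∧ ∀ᶠ m : ℕ in atTop,
      ENNReal.ofReal (Real.exp (-ζ₁ * (m : ℝ) ^ ((1 : ℝ) / 3))) ≤
        ℙ {ω | ∀ k ≤ m,
          gBar vp A m k - vp * k ≤ (walk ξ k ω : ℝ) - vp * k ∧
          (walk ξ k ω : ℝ) - vp * k ≤ dBar vp m k - vp * k} :=
  tube_probability_lower_bound_general p hp0 hp1 vp hvp0 hvp1 hvproot A Ω ξ hiid hlaw

end
end

section
/- Let ρ, σ ∈ ℝ with ρ + 1 < σ, let v ∈ (0,1), and let ℓ be a positive integer such that σ + ℓ·v < ρ + ℓ and ρ + v·ℓ > σ. Then for every x ∈ ℤ ∩ [ρ, σ] and every y ∈ ℤ ∩ [ρ + v·ℓ, σ + v·ℓ], there exists a sequence x = x₀, x₁, …, x_ℓ = y of integers such that x_{i+1} − x_i ∈ {0,1} for all i ∈ {0,…,ℓ−1} and ρ + v·i ≤ x_i ≤ σ + v·i for all i ∈ {0,…,ℓ}. -/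
/-!
Take for the path the pointwise maximum of the constant path at `x`, the
path climbing at unit speed that arrives at `y` at time `ℓ`, and the ceiling of the lower edge
`ρ + v i` of the strip. Each of the three moves by `0` or `1` per step, hence so does their
maximum. The width `σ - ρ > 1` keeps the ceiling inside the strip, and the two slope conditions
`σ + ℓv < ρ + ℓ`, `σ < ρ + vℓ` ensure that the maximum starts at `x` and ends at `y`.
-/

def HasZeroOneSteps (c : ℕ → ℤ) : Prop :=
  ∀ i, c i ≤ c (i + 1) ∧ c (i + 1) ≤ c i + 1

namespace HasZeroOneSteps

lemma sub_eq_zero_or_one {c : ℕ → ℤ} (hc : HasZeroOneSteps c) (i : ℕ) :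
    c (i + 1) - c i = 0 ∨ c (i + 1) - c i = 1 := by
  have := hc i
  omega

lemma const (a : ℤ) : HasZeroOneSteps fun _ => a :=
  fun _ => ⟨le_rfl, Int.le_add_one le_rfl⟩

lemma add_nat (a : ℤ) : HasZeroOneSteps fun i => a + i :=
  fun i => by push_cast; omega

lemma max {c d : ℕ → ℤ} (hc : HasZeroOneSteps c) (hd : HasZeroOneSteps d) :
    HasZeroOneSteps fun i => max (c i) (d i) := fun i => by
  beta_reduce
  have := hc i
  have := hd i
  omega

lemma ceil_affine (ρ : ℝ) {v : ℝ} (hv0 : 0 ≤ v) (hv1 : v ≤ 1) :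
    HasZeroOneSteps fun i => ⌈ρ + v * i⌉ := fun i => by
  push_cast
  refine ⟨Int.ceil_le_ceil (by nlinarith), Int.ceil_le.mpr ?_⟩
  push_cast
  linarith [Int.le_ceil (ρ + v * i)]

end HasZeroOneSteps

noncomputable def stripPath (ρ v : ℝ) (ℓ : ℕ) (x y : ℤ) (i : ℕ) : ℤ :=
  max (max x (y - ℓ + i)) ⌈ρ + v * i⌉

section stripPath

variable {ρ σ v : ℝ} {ℓ : ℕ} {x y : ℤ}

lemma stripPath_hasZeroOneSteps (hv0 : 0 ≤ v) (hv1 : v ≤ 1) :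
    HasZeroOneSteps (stripPath ρ v ℓ x y) :=
  ((HasZeroOneSteps.const x).max (HasZeroOneSteps.add_nat _)).max
    (HasZeroOneSteps.ceil_affine ρ hv0 hv1)

lemma stripPath_zero (hyx : (y : ℝ) ≤ x + ℓ) (hx : ρ ≤ x) : stripPath ρ v ℓ x y 0 = x := by
  have hyx' : y - ℓ ≤ x := by exact_mod_cast (by linarith : (y : ℝ) - ℓ ≤ x)
  have hceil : ⌈ρ⌉ ≤ x := Int.ceil_le.mpr hx
  simp only [stripPath, Nat.cast_zero, mul_zero, add_zero]
  omega

lemma stripPath_length (hxy : x ≤ y) (hy : ρ + v * ℓ ≤ y) : stripPath ρ v ℓ x y ℓ = y := by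
  have hceil : ⌈ρ + v * ℓ⌉ ≤ y := Int.ceil_le.mpr hy
  simp only [stripPath]
  omega

lemma le_stripPath (i : ℕ) : ρ + v * i ≤ stripPath ρ v ℓ x y i :=
  (Int.le_ceil _).trans (by exact_mod_cast le_max_right _ _)

lemma stripPath_le (hρσ : ρ + 1 < σ) (hv0 : 0 ≤ v) (hv1 : v ≤ 1) (hx : (x : ℝ) ≤ σ)
    (hy : (y : ℝ) ≤ σ + v * ℓ) {i : ℕ} (hi : i ≤ ℓ) : stripPath ρ v ℓ x y i ≤ σ + v * i := by
  have hiℓ : (i : ℝ) ≤ ℓ := by exact_mod_cast hi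
  simp only [stripPath, Int.cast_max]
  refine max_le (max_le ?_ ?_) ?_
  · nlinarith [Nat.cast_nonneg (α := ℝ) i]
  · push_cast
    nlinarith
  · linarith [Int.ceil_lt_add_one (ρ + v * i)]

end stripPath

theorem strip_path_connection_general
    (ρ σ : ℝ) (hρσ : ρ + 1 < σ) (v : ℝ) (hv0 : 0 < v) (hv1 : v < 1)
    (ℓ : ℕ) (h1 : σ + ℓ * v < ρ + ℓ) (h2 : σ < ρ + v * ℓ)
    (x y : ℤ) (hx0 : ρ ≤ (x : ℝ)) (hx1 : (x : ℝ) ≤ σ)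
    (hy0 : ρ + v * ℓ ≤ (y : ℝ)) (hy1 : (y : ℝ) ≤ σ + v * ℓ) :
    ∃ c : ℕ → ℤ, c 0 = x ∧ c ℓ = y ∧
      (∀ i < ℓ, c (i + 1) - c i = 0 ∨ c (i + 1) - c i = 1) ∧
      (∀ i ≤ ℓ, ρ + v * i ≤ (c i : ℝ) ∧ (c i : ℝ) ≤ σ + v * i) := by
  have hxy : x ≤ y := by exact_mod_cast (by linarith : (x : ℝ) ≤ y)
  refine ⟨stripPath ρ v ℓ x y, stripPath_zero (by linarith) hx0, stripPath_length hxy hy0,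
    fun i _ => (stripPath_hasZeroOneSteps hv0.le hv1.le).sub_eq_zero_or_one i,
    fun i hi => ⟨le_stripPath i, stripPath_le hρσ hv0.le hv1.le hx1 hy1 hi⟩⟩

/-- **Lemma (path connection in a diagonal strip):** let `ρ + 1 < σ`, `v ∈ (0,1)` and let
`ℓ ≥ 1` satisfy `σ + ℓv < ρ + ℓ` and `ρ + vℓ > σ`.  Then any integer `x ∈ [ρ, σ]` can be
joined to any integer `y ∈ [ρ + vℓ, σ + vℓ]` by a path of `ℓ` steps in `{0,1}` staying in
the strip `[ρ + vi, σ + vi]`. -/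
theorem strip_path_connection
    (ρ σ : ℝ) (hρσ : ρ + 1 < σ) (v : ℝ) (hv0 : 0 < v) (hv1 : v < 1)
    (ℓ : ℕ) (hℓ : 1 ≤ ℓ) (h1 : σ + ℓ * v < ρ + ℓ) (h2 : σ < ρ + v * ℓ)
    (x y : ℤ) (hx0 : ρ ≤ (x : ℝ)) (hx1 : (x : ℝ) ≤ σ)
    (hy0 : ρ + v * ℓ ≤ (y : ℝ)) (hy1 : (y : ℝ) ≤ σ + v * ℓ) :
    ∃ c : ℕ → ℤ, c 0 = x ∧ c ℓ = y ∧
      (∀ i < ℓ, c (i + 1) - c i = 0 ∨ c (i + 1) - c i = 1) ∧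
      (∀ i ≤ ℓ, ρ + v * i ≤ (c i : ℝ) ∧ (c i : ℝ) ≤ σ + v * i) :=
  strip_path_connection_general ρ σ hρσ v hv0 hv1 ℓ h1 h2 x y hx0 hx1 hy0 hy1
end
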